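/- Let L > 0. For every integer n and every x ∈ ℝ, the derivative of the rational basis function satisfies φ_n′(x) = (i/(2L)) · ( n · φ_{n−1}(x) + (2n+1) · φ_n(x) + (n+1) · φ_{n+1}(x) ). -/

import Mathlib

/-- Rational basis function `φ_n(x) = (L + ix)^n / (L - ix)^(n+1)`. -/
noncomputable def ratBasis (L : ℝ) (n : ℤ) (x : ℝ) : ℂ :=
  ((L : ℂ) + Complex.I * x) ^ n / ((L : ℂ) - Complex.I * x) ^ (n + 1)

/-!
Writing `a = L + ix` and `b = L - ix`, so that `a' = i`, `b' = -i` and `a + b = 2L`, the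
logarithmic derivative of `φ_n = a^n / b^(n+1)` is `i (n/a + (n+1)/b)`. Since
`φ_{n-1} = φ_n · b/a` and `φ_{n+1} = φ_n · a/b`, the right-hand side is
`φ_n · (i/(a+b)) · (n (a+b)/a + (n+1) (a+b)/b)`, which is the same thing.
-/

open Complex

section ZPowDiv

variable {𝕜 𝕜' : Type*} [NontriviallyNormedField 𝕜] [NontriviallyNormedField 𝕜']
  [NormedAlgebra 𝕜 𝕜'] {f g : 𝕜 → 𝕜'} {f' g' : 𝕜'} {x : 𝕜}

theorem HasDerivAt.zpow_div_zpow (m k : ℤ) (hf : HasDerivAt f f' x) (hg : HasDerivAt g g' x)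
    (hfx : f x ≠ 0) (hgx : g x ≠ 0) :
    HasDerivAt (fun y => f y ^ m / g y ^ k)
      (f x ^ m / g x ^ k * (m * f' / f x - k * g' / g x)) x := by
  have hfm := (hasDerivAt_zpow m (f x) (.inl hfx)).comp x hf
  have hgk := (hasDerivAt_zpow k (g x) (.inl hgx)).comp x hg
  refine (hfm.div hgk (zpow_ne_zero k hgx)).congr_deriv ?_
  rw [Function.comp_apply, Function.comp_apply, zpow_sub_one₀ hfx, zpow_sub_one₀ hgx]
  field_simp

end ZPowDiv

theorem ofReal_add_I_mul_ne_zero {L : ℝ} (hL : L ≠ 0) (t : ℝ) : (L : ℂ) + I * t ≠ 0 :=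
  fun h => hL (by simpa using congrArg re h)

theorem ofReal_sub_I_mul_ne_zero {L : ℝ} (hL : L ≠ 0) (t : ℝ) : (L : ℂ) - I * t ≠ 0 :=
  fun h => hL (by simpa using congrArg re h)

theorem hasDerivAt_ofReal_add_I_mul (L x : ℝ) :
    HasDerivAt (fun y : ℝ => (L : ℂ) + I * y) I x := by
  simpa using ((hasDerivAt_id x).ofReal_comp.const_mul I).const_add (L : ℂ)

theorem hasDerivAt_ofReal_sub_I_mul (L x : ℝ) :
    HasDerivAt (fun y : ℝ => (L : ℂ) - I * y) (-I) x := by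
  simpa using ((hasDerivAt_id x).ofReal_comp.const_mul I).const_sub (L : ℂ)

theorem ratBasis_sub_one {L : ℝ} (hL : L ≠ 0) (n : ℤ) (x : ℝ) :
    ratBasis L (n - 1) x = ratBasis L n x * (((L : ℂ) - I * x) / ((L : ℂ) + I * x)) := by
  have ha := ofReal_add_I_mul_ne_zero hL x
  have hb := ofReal_sub_I_mul_ne_zero hL x
  simp only [ratBasis, sub_add_cancel, zpow_sub_one₀ ha, zpow_add_one₀ hb]
  field_simp

theorem ratBasis_add_one {L : ℝ} (hL : L ≠ 0) (n : ℤ) (x : ℝ) :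
    ratBasis L (n + 1) x = ratBasis L n x * (((L : ℂ) + I * x) / ((L : ℂ) - I * x)) := by
  have ha := ofReal_add_I_mul_ne_zero hL x
  have hb := ofReal_sub_I_mul_ne_zero hL x
  simp only [ratBasis, zpow_add_one₀ ha, zpow_add_one₀ hb]
  field_simp

/-- `φ_n'(x) = (i/(2L)) (n φ_{n-1}(x) + (2n+1) φ_n(x) + (n+1) φ_{n+1}(x))`. -/
theorem ratBasis_deriv (L : ℝ) (hL : 0 < L) (n : ℤ) (x : ℝ) :
    HasDerivAt (fun y : ℝ => ratBasis L n y)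
      ((Complex.I / (2 * (L : ℂ))) *
        ((n : ℂ) * ratBasis L (n - 1) x + (2 * (n : ℂ) + 1) * ratBasis L n x +
          ((n : ℂ) + 1) * ratBasis L (n + 1) x)) x := by
  have ha := ofReal_add_I_mul_ne_zero hL.ne' x
  have hb := ofReal_sub_I_mul_ne_zero hL.ne' x
  have hL' : (L : ℂ) ≠ 0 := ofReal_ne_zero.mpr hL.ne'
  refine ((hasDerivAt_ofReal_add_I_mul L x).zpow_div_zpow n (n + 1)
    (hasDerivAt_ofReal_sub_I_mul L x) ha hb).congr_deriv ?_
  rw [ratBasis_sub_one hL.ne', ratBasis_add_one hL.ne']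
  change ratBasis L n x * _ = _
  push_cast
  field_simp
  ring
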